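/- In Equiv.Perm (ℤ × ZMod 2), let τ be the permutation τ (i, j) = (i + 1, j) and let σ be the permutation with σ (i, j) = (i, j + 1) if i = 0 and σ (i, j) = (i, j) if i ≠ 0, and let G be the subgroup of Equiv.Perm (ℤ × ZMod 2) generated by {σ, τ}. Then there exists a group homomorphism φ : G →* ℤ with φ τ = 1 and φ σ = 0; φ is surjective; the kernel of φ is infinite; and every element g of the kernel of φ satisfies g * g = 1. Consequently ker φ is an infinite torsion normal subgroup of G all of whose nontrivial elements have order 2, and G ⧸ ker φ is isomorphic to ℤ. -/

import Mathlib

/-- The permutation `c` of the graph `𝔗`: shift the first coordinate on both lines. -/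
def tTau : Equiv.Perm (ℤ × ZMod 2) where
  toFun p := (p.1 + 1, p.2)
  invFun p := (p.1 - 1, p.2)
  left_inv p := by simp
  right_inv p := by simp

/-- The permutation `a` of the graph `𝔗`: swap the two lines at level `0`, fix everything
else. -/
def tSigma : Equiv.Perm (ℤ × ZMod 2) where
  toFun p := if p.1 = 0 then (p.1, p.2 + 1) else p
  invFun p := if p.1 = 0 then (p.1, p.2 - 1) else p
  left_inv p := by by_cases h : p.1 = 0 <;> simp [h, Prod.ext_iff]
  right_inv p := by by_cases h : p.1 = 0 <;> simp [h, Prod.ext_iff]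

/-!
`G` sits inside the lamplighter group `A ≀ ℤ` (here `A = ZMod 2`), realised as the permutations
`(i, a) ↦ (i + n, a + c i)` of `ℤ × A`. The shift `n` is a homomorphism onto `ℤ`, sending `τ ↦ 1`
and `σ ↦ 0`; its kernel consists of the maps `(i, a) ↦ (i, a + c i)`, which are involutions because
`2 = 0` in `ZMod 2`. The conjugates `τᵏ σ τ⁻ᵏ`, which flip the two lines exactly at level `k`,
are pairwise distinct elements of the kernel.
-/

open Equiv

section Lamplighter

variable (A : Type*) [AddCommGroup A]

def lamplighter : Subgroup (Perm (ℤ × A)) where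
  carrier := {g | ∃ n : ℤ, ∃ c : ℤ → A, ∀ p, g p = (p.1 + n, p.2 + c p.1)}
  one_mem' := ⟨0, 0, by simp⟩
  mul_mem' := by
    rintro g h ⟨n, c, hg⟩ ⟨m, d, hh⟩
    exact ⟨m + n, fun i => d i + c (i + m), fun p => by simp [Perm.mul_apply, hg, hh, add_assoc]⟩
  inv_mem' := by
    rintro g ⟨n, c, hg⟩
    refine ⟨-n, fun i => -c (i - n), fun p => ?_⟩
    rw [Perm.inv_eq_iff_eq, hg]
    simp [← sub_eq_add_neg]

variable {A}

theorem lamplighter.fst_apply {g : Perm (ℤ × A)} (hg : g ∈ lamplighter A) (p : ℤ × A) :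
    (g p).1 = p.1 + (g (0, 0)).1 := by
  obtain ⟨n, c, hc⟩ := hg
  simp [hc]

variable (A)

def lamplighter.shift : lamplighter A →* Multiplicative ℤ where
  toFun g := Multiplicative.ofAdd ((g : Perm (ℤ × A)) (0, 0)).1
  map_one' := rfl
  map_mul' g h := by
    change Multiplicative.ofAdd ((g : Perm (ℤ × A)) ((h : Perm (ℤ × A)) (0, 0))).1 =
      Multiplicative.ofAdd (((g : Perm (ℤ × A)) (0, 0)).1 + ((h : Perm (ℤ × A)) (0, 0)).1)
    rw [lamplighter.fst_apply g.2, add_comm]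

variable {A}

theorem lamplighter.mul_self_eq_one {g : Perm (ℤ × A)} (hg : g ∈ lamplighter A)
    (h0 : (g (0, 0)).1 = 0) (h2 : ∀ a : A, a + a = 0) : g * g = 1 := by
  obtain ⟨n, c, hc⟩ := hg
  obtain rfl : n = 0 := by simpa [hc] using h0
  ext p <;> simp [hc, add_assoc, h2]

end Lamplighter

theorem tTau_zpow_apply (k : ℤ) (p : ℤ × ZMod 2) : (tTau ^ k) p = (p.1 + k, p.2) := by
  induction k using Int.induction_on generalizing p with
  | zero => simp
  | succ i ih =>
    rw [zpow_add_one, Perm.mul_apply, ih]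
    simp only [tTau, coe_fn_mk, Prod.mk.injEq, and_true]
    ring
  | pred i ih =>
    rw [zpow_sub_one, Perm.mul_apply, ih]
    simp only [tTau, Perm.inv_def, symm_mk, coe_fn_mk, Prod.mk.injEq, and_true]
    ring

theorem tTau_zpow_mul_tSigma_mul_tTau_zpow_neg_apply (k : ℤ) (p : ℤ × ZMod 2) :
    (tTau ^ k * tSigma * tTau ^ (-k)) p = if p.1 = k then (p.1, p.2 + 1) else p := by
  simp only [Perm.mul_apply, tTau_zpow_apply, tSigma, Equiv.coe_fn_mk, ← sub_eq_add_neg,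
    sub_eq_zero]
  split_ifs <;> simp

theorem injective_tTau_zpow_mul_tSigma_mul_tTau_zpow_neg :
    Function.Injective fun k : ℤ => tTau ^ k * tSigma * tTau ^ (-k) := by
  intro k l hkl
  have := congrArg (fun g : Perm (ℤ × ZMod 2) => g (k, 0)) hkl
  simp only [tTau_zpow_mul_tSigma_mul_tTau_zpow_neg_apply] at this
  simpa using this

theorem closure_tSigma_tTau_le_lamplighter :
    Subgroup.closure {tSigma, tTau} ≤ lamplighter (ZMod 2) := by
  rw [Subgroup.closure_le, Set.insert_subset_iff, Set.singleton_subset_iff]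
  refine ⟨⟨0, fun i => if i = 0 then 1 else 0, fun p => ?_⟩, ⟨1, 0, fun p => by simp [tTau]⟩⟩
  by_cases h : p.1 = 0 <;> simp [tSigma, h]

/-- The transition group `G` of the graph `𝔗` surjects onto `ℤ` (exponent sum of `c`), sending
`τ ↦ 1` and `σ ↦ 0`; the kernel (the boundary subgroup `ℬ₁`) is an infinite torsion normal
subgroup whose elements all square to the identity, and `G ⧸ ker φ ≃ ℤ`. -/
theorem stmt19 :
    ∃ φ : ↥(Subgroup.closure ({tSigma, tTau} : Set (Equiv.Perm (ℤ × ZMod 2)))) →*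
        Multiplicative ℤ,
      φ ⟨tTau, Subgroup.subset_closure (by simp)⟩ = Multiplicative.ofAdd 1 ∧
      φ ⟨tSigma, Subgroup.subset_closure (by simp)⟩ = Multiplicative.ofAdd 0 ∧
      Function.Surjective φ ∧
      Infinite φ.ker ∧
      (∀ g ∈ φ.ker, g * g = 1) ∧
      Nonempty
        ((↥(Subgroup.closure ({tSigma, tTau} : Set (Equiv.Perm (ℤ × ZMod 2)))) ⧸ φ.ker) ≃*
          Multiplicative ℤ) := by
  set G := Subgroup.closure ({tSigma, tTau} : Set (Perm (ℤ × ZMod 2)))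
  let φ := (lamplighter.shift (ZMod 2)).comp
    (Subgroup.inclusion closure_tSigma_tTau_le_lamplighter)
  have hτ : tTau ∈ G := Subgroup.subset_closure (by simp)
  have hσ : tSigma ∈ G := Subgroup.subset_closure (by simp)
  have hφτ : φ ⟨tTau, hτ⟩ = Multiplicative.ofAdd 1 := rfl
  have hsurj : Function.Surjective φ := fun z =>
    ⟨⟨tTau, hτ⟩ ^ Multiplicative.toAdd z, by rw [map_zpow, hφτ, ← ofAdd_zsmul]; simp⟩
  let flipAt (k : ℤ) : φ.ker :=
    ⟨⟨tTau ^ k * tSigma * tTau ^ (-k),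
        G.mul_mem (G.mul_mem (G.zpow_mem hτ k) hσ) (G.zpow_mem hτ (-k))⟩, by
        change Multiplicative.ofAdd ((tTau ^ k * tSigma * tTau ^ (-k)) (0, 0)).1 = 1
        rw [tTau_zpow_mul_tSigma_mul_tTau_zpow_neg_apply]
        split_ifs <;> rfl⟩
  have flipAt_injective : Function.Injective flipAt := fun k l h =>
    injective_tTau_zpow_mul_tSigma_mul_tTau_zpow_neg
      (congrArg (fun g : φ.ker => ((g : G) : Perm (ℤ × ZMod 2))) h)
  refine ⟨φ, hφτ, rfl, hsurj, Infinite.of_injective flipAt flipAt_injective, fun g hg => ?_,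
    ⟨QuotientGroup.quotientKerEquivOfSurjective φ hsurj⟩⟩
  exact Subtype.ext <| lamplighter.mul_self_eq_one (closure_tSigma_tTau_le_lamplighter g.2)
    (Multiplicative.ofAdd.injective hg) (by decide)
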